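/- Let w ≥ 4, fix integers n > m ≥ 1, and let 0 ≤ s ≤ t be integers with 2^t ≤ w−2. Let x : ℤ → F₂^w be a sequence satisfying x_{k+n} = x_{k+m} + x_{k+1}·B + x_k·C for all k ∈ ℤ, and let i ∈ ℤ. Then the repetitions x_{i+2^k(m-1)} = x_{i+2^k(n-1)} hold simultaneously for all k with s ≤ k ≤ t if and only if x_i·B^{2^k} + x_{i-1}·Q_{2^k} = 0 for all k with s ≤ k ≤ t. -/

import Mathlib

open Matrix

/-- The matrix `B` of MT-type recursions: first row zero, row `i` (0-indexed,
`1 ≤ i ≤ w-2`) is the standard basis row vector with a `1` in column `i+1`,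
and the last row is `(a_{w-1}, …, a_0)` (stored as `a 0, …, a (w-1)`). -/
def mtB (w : ℕ) (a : Fin w → ZMod 2) : Matrix (Fin w) (Fin w) (ZMod 2) :=
  Matrix.of fun i j =>
    if (i : ℕ) = w - 1 then a j
    else if 1 ≤ (i : ℕ) ∧ (j : ℕ) = (i : ℕ) + 1 then 1 else 0

/-- The matrix `C`: its only nonzero entry is a `1` in position `(1,2)` (1-indexed). -/
def mtC (w : ℕ) : Matrix (Fin w) (Fin w) (ZMod 2) :=
  Matrix.of fun i j => if (i : ℕ) = 0 ∧ (j : ℕ) = 1 then 1 else 0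

/-- `Q_k = Σ_{i=0}^{k-1} B^i · C · B^{k-1-i}`. -/
def mtQ (w : ℕ) (a : Fin w → ZMod 2) (k : ℕ) : Matrix (Fin w) (Fin w) (ZMod 2) :=
  ∑ i ∈ Finset.range k, (mtB w a) ^ i * mtC w * (mtB w a) ^ (k - 1 - i)

/-!
Over `F₂` the operator `T = S^(n-1) + S^(m-1)`, with `S` the shift of indices, satisfies
`T^(2^k) = S^(2^k (n-1)) + S^(2^k (m-1))` (Frobenius), while the recurrence says
`T x_i = x_i B + x_(i-1) C`. Expanding `T^j` for `j = 2^k`, every term with two factors `C`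
contains some `C B^r C` with `r ≤ 2j - 2 ≤ w - 2`, and these vanish because row 2 of `B^r` is
`e_(2+r)`. Only `x_i B^j + x_(i-1) Q_j` survives, so each repetition is equivalent to the
vanishing of that linear form. The expansion is done by doubling, via
`Q_(2j) = Q_j B^j + B^j Q_j` and `Q_j² = 0`.
-/

theorem pi_zmod_two_add_eq_zero_iff {ι : Type*} {u v : ι → ZMod 2} : u + v = 0 ↔ u = v := by
  simp only [funext_iff, Pi.add_apply, Pi.zero_apply, CharTwo.add_eq_zero]

section Matrices

variable {w : ℕ} (a : Fin w → ZMod 2)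

theorem mtB_row {k : ℕ} (hk : 1 ≤ k) (hkw : k + 1 < w) :
    mtB w a ⟨k, by omega⟩ = Pi.single ⟨k + 1, hkw⟩ 1 := by
  ext j
  have hne : k ≠ w - 1 := by omega
  simp only [mtB, Matrix.of_apply, Pi.single_apply, Fin.ext_iff, if_neg hne, hk, true_and]

theorem mtB_pow_row_one {r : ℕ} (hr : r + 1 < w) :
    (mtB w a ^ r) ⟨1, by omega⟩ = Pi.single ⟨r + 1, hr⟩ 1 := by
  induction r with
  | zero => ext j; simp [Matrix.one_apply, Pi.single_apply, Fin.ext_iff, eq_comm]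
  | succ r ih =>
    rw [pow_succ, Matrix.mul_apply_eq_vecMul, ih (by omega), Matrix.single_one_vecMul]
    exact mtB_row a (by omega) hr

theorem mtC_eq_single (hw : 2 ≤ w) : mtC w = Matrix.single ⟨0, by omega⟩ ⟨1, hw⟩ 1 := by
  ext i j
  simp [mtC, Matrix.single, Fin.ext_iff, eq_comm]

theorem mtC_mul_mtB_pow_mul_mtC {r : ℕ} (hr : r + 2 ≤ w) :
    mtC w * mtB w a ^ r * mtC w = 0 := by
  rw [mtC_eq_single (by omega), Matrix.single_mul_mul_single, mtB_pow_row_one a (by omega)]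
  simp [Fin.ext_iff]

theorem mtQ_one : mtQ w a 1 = mtC w := by
  simp [mtQ]

theorem mtQ_two_mul (j : ℕ) :
    mtQ w a (2 * j) = mtQ w a j * mtB w a ^ j + mtB w a ^ j * mtQ w a j := by
  rw [mtQ, two_mul, Finset.sum_range_add, mtQ, Finset.sum_mul, Finset.mul_sum]
  congr 1 <;> refine Finset.sum_congr rfl fun i hi => ?_ <;> rw [Finset.mem_range] at hi
  · rw [show j + j - 1 - i = j - 1 - i + j by omega, pow_add]
    simp only [mul_assoc]
  · rw [show j + j - 1 - (j + i) = j - 1 - i by omega, pow_add]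
    simp only [mul_assoc]

theorem mtQ_mul_self {j : ℕ} (hj : 2 * j ≤ w) : mtQ w a j * mtQ w a j = 0 := by
  rw [mtQ, Finset.sum_mul_sum]
  refine Finset.sum_eq_zero fun b hb => Finset.sum_eq_zero fun c hc => ?_
  rw [Finset.mem_range] at hb hc
  calc mtB w a ^ b * mtC w * mtB w a ^ (j - 1 - b) * (mtB w a ^ c * mtC w * mtB w a ^ (j - 1 - c))
      = mtB w a ^ b * (mtC w * mtB w a ^ (j - 1 - b + c) * mtC w) * mtB w a ^ (j - 1 - c) := by
        simp only [pow_add, mul_assoc]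
    _ = 0 := by rw [mtC_mul_mtB_pow_mul_mtC a (by omega), mul_zero, zero_mul]

end Matrices

section Recurrence

variable {w : ℕ} (x : ℤ → Fin w → ZMod 2) (n m : ℤ)

def shiftPairSum (j : ℕ) (i : ℤ) : Fin w → ZMod 2 :=
  x (i + j * (n - 1)) + x (i + j * (m - 1))

theorem shiftPairSum_two_mul (j : ℕ) (i : ℤ) :
    shiftPairSum x n m (2 * j) i =
      shiftPairSum x n m j (i + j * (n - 1)) + shiftPairSum x n m j (i + j * (m - 1)) := by
  have hmid : x (i + j * (n - 1) + j * (m - 1)) + x (i + j * (m - 1) + j * (n - 1)) = 0 :=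
    pi_zmod_two_add_eq_zero_iff.mpr (congrArg x (by ring))
  simp only [shiftPairSum]
  push_cast
  rw [show i + 2 * j * (n - 1) = i + j * (n - 1) + j * (n - 1) by ring,
    show i + 2 * j * (m - 1) = i + j * (m - 1) + j * (m - 1) by ring]
  linear_combination -hmid

variable {x n m}

theorem shiftPairSum_one (a : Fin w → ZMod 2)
    (hx : ∀ k : ℤ, x (k + n) = x (k + m) + x (k + 1) ᵥ* mtB w a + x k ᵥ* mtC w) (i : ℤ) :
    shiftPairSum x n m 1 i = x i ᵥ* mtB w a ^ 1 + x (i - 1) ᵥ* mtQ w a 1 := by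
  have h := hx (i - 1)
  rw [sub_add_cancel] at h
  rw [shiftPairSum, pow_one, mtQ_one, Nat.cast_one, one_mul, one_mul,
    show i + (n - 1) = i - 1 + n by ring, show i + (m - 1) = i - 1 + m by ring, h, add_comm,
    ← add_assoc, ← add_assoc, pi_zmod_two_add_eq_zero_iff.mpr rfl, zero_add]

theorem shiftPairSum_two_mul_eq (a : Fin w → ZMod 2) {j : ℕ} (hj : 2 * j ≤ w)
    (h : ∀ i, shiftPairSum x n m j i = x i ᵥ* mtB w a ^ j + x (i - 1) ᵥ* mtQ w a j) (i : ℤ) :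
    shiftPairSum x n m (2 * j) i =
      x i ᵥ* mtB w a ^ (2 * j) + x (i - 1) ᵥ* mtQ w a (2 * j) := by
  set B := mtB w a ^ j
  set Q := mtQ w a j
  calc shiftPairSum x n m (2 * j) i
      = shiftPairSum x n m j (i + j * (n - 1)) + shiftPairSum x n m j (i + j * (m - 1)) :=
        shiftPairSum_two_mul x n m j i
    _ = shiftPairSum x n m j i ᵥ* B + shiftPairSum x n m j (i - 1) ᵥ* Q := by
        rw [h, h, shiftPairSum, shiftPairSum,
          show i + j * (n - 1) - 1 = i - 1 + j * (n - 1) by ring,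
          show i + j * (m - 1) - 1 = i - 1 + j * (m - 1) by ring]
        simp only [Matrix.add_vecMul]
        abel
    _ = (x i ᵥ* B + x (i - 1) ᵥ* Q) ᵥ* B + (x (i - 1) ᵥ* B + x (i - 1 - 1) ᵥ* Q) ᵥ* Q := by
        rw [h, h]
    _ = x i ᵥ* (B * B) + x (i - 1) ᵥ* (Q * B + B * Q) + x (i - 1 - 1) ᵥ* (Q * Q) := by
        simp only [Matrix.add_vecMul, Matrix.vecMul_vecMul, Matrix.vecMul_add]
        abel
    _ = x i ᵥ* mtB w a ^ (2 * j) + x (i - 1) ᵥ* mtQ w a (2 * j) := by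
        rw [mtQ_mul_self a hj, Matrix.vecMul_zero, add_zero, mtQ_two_mul, two_mul, pow_add]

theorem shiftPairSum_two_pow (a : Fin w → ZMod 2)
    (hx : ∀ k : ℤ, x (k + n) = x (k + m) + x (k + 1) ᵥ* mtB w a + x k ᵥ* mtC w) {k : ℕ}
    (hk : 2 ^ k ≤ w) (i : ℤ) :
    shiftPairSum x n m (2 ^ k) i = x i ᵥ* mtB w a ^ 2 ^ k + x (i - 1) ᵥ* mtQ w a (2 ^ k) := by
  induction k generalizing i with
  | zero => exact shiftPairSum_one a hx i
  | succ k ih =>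
    rw [pow_succ'] at hk ⊢
    exact shiftPairSum_two_mul_eq a hk (ih (by omega)) i

end Recurrence

theorem stmt14_general (w : ℕ) (a : Fin w → ZMod 2) (n m : ℤ)
    (s t : ℕ) (ht : 2 ^ t ≤ w - 2)
    (x : ℤ → Fin w → ZMod 2)
    (hx : ∀ k : ℤ, x (k + n) = x (k + m) + x (k + 1) ᵥ* mtB w a + x k ᵥ* mtC w)
    (i : ℤ) :
    (∀ k : ℕ, s ≤ k → k ≤ t → x (i + 2 ^ k * (m - 1)) = x (i + 2 ^ k * (n - 1))) ↔
    (∀ k : ℕ, s ≤ k → k ≤ t →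
      x i ᵥ* (mtB w a) ^ (2 ^ k) + x (i - 1) ᵥ* mtQ w a (2 ^ k) = 0) := by
  refine forall₃_congr fun k _ hkt => ?_
  have hk : 2 ^ k ≤ w := (Nat.pow_le_pow_right two_pos hkt).trans (ht.trans (Nat.sub_le w 2))
  rw [← shiftPairSum_two_pow a hx hk i, shiftPairSum, pi_zmod_two_add_eq_zero_iff, eq_comm]
  norm_cast

/-- simultaneous repetitions for `s ≤ k ≤ t` are equivalent to
the simultaneous linear conditions `x_i·B^{2^k} + x_{i-1}·Q_{2^k} = 0`. -/
theorem stmt14 (w : ℕ) (hw : 4 ≤ w) (a : Fin w → ZMod 2) (n m : ℤ)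
    (hm : 1 ≤ m) (hmn : m < n) (s t : ℕ) (hst : s ≤ t) (ht : 2 ^ t ≤ w - 2)
    (x : ℤ → Fin w → ZMod 2)
    (hx : ∀ k : ℤ, x (k + n) = x (k + m) + x (k + 1) ᵥ* mtB w a + x k ᵥ* mtC w)
    (i : ℤ) :
    (∀ k : ℕ, s ≤ k → k ≤ t → x (i + 2 ^ k * (m - 1)) = x (i + 2 ^ k * (n - 1))) ↔
    (∀ k : ℕ, s ≤ k → k ≤ t →
      x i ᵥ* (mtB w a) ^ (2 ^ k) + x (i - 1) ᵥ* mtQ w a (2 ^ k) = 0) :=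
  stmt14_general w a n m s t ht x hx i
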